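/- If $x_1, \ldots, x_n$ are real numbers ($n \ge 2$) with sum $b_1$ and sum of squares $S = b_1^2 - 2b_2$, then for each index $k$, $n x_k^2 - 2 b_1 x_k + 2(n-1) b_2 - (n-2) b_1^2 \le 0$, where $b_2 = \sum_{i<j} x_i x_j$. -/

import Mathlib

/-!
Since `b₁² = ∑ xᵢ² + 2 b₂`, the left-hand side equals `(b₁ - x_k)² - (n - 1) (∑ xᵢ² - x_k²)`,
and this is `≤ 0` by Cauchy–Schwarz applied to the `n - 1` numbers `xᵢ`, `i ≠ k`.
-/

open Finset

theorem sq_sum_eq_sum_sq_add_two_mul_sum_lt {ι R : Type*} [Fintype ι] [LinearOrder ι]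
    [CommSemiring R] (x : ι → R) :
    (∑ i, x i) ^ 2 = ∑ i, x i ^ 2 + 2 * ∑ i, ∑ j, if i < j then x i * x j else 0 := by
  have mul_split : ∀ i j, x i * x j = (if i < j then x i * x j else 0)
      + (if j < i then x j * x i else 0) + (if i = j then x i * x j else 0) := by
    intro i j
    rcases lt_trichotomy i j with h | rfl | h
    · simp [h, h.ne, h.not_gt]
    · simp
    · simp [h, h.ne', h.not_gt, mul_comm]
  calc (∑ i, x i) ^ 2 = ∑ i, ∑ j, x i * x j := by rw [sq, sum_mul_sum]
    _ = ∑ i, ∑ j, ((if i < j then x i * x j else 0)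
        + (if j < i then x j * x i else 0) + (if i = j then x i * x j else 0)) :=
      sum_congr rfl fun i _ => sum_congr rfl fun j _ => mul_split i j
    _ = (∑ i, ∑ j, if i < j then x i * x j else 0)
        + (∑ i, ∑ j, if i < j then x i * x j else 0)
        + ∑ i, ∑ j, if i = j then x i * x j else 0 := by
      simp only [sum_add_distrib]
      rw [sum_comm (f := fun i j => if j < i then x j * x i else 0)]
    _ = ∑ i, x i ^ 2 + 2 * ∑ i, ∑ j, if i < j then x i * x j else 0 := by
      simp only [sum_ite_eq, mem_univ, if_true, sq]
      ring

theorem sq_sum_sub_le_card_sub_one_mul {ι α : Type*} [Fintype ι] [DecidableEq ι]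
    [CommRing α] [LinearOrder α] [IsStrictOrderedRing α] (x : ι → α) (k : ι) :
    (∑ i, x i - x k) ^ 2 ≤ (Fintype.card ι - 1 : α) * (∑ i, x i ^ 2 - x k ^ 2) := by
  have h := sq_sum_le_card_mul_sum_sq (s := univ.erase k) (f := x)
  rwa [sum_erase_eq_sub (mem_univ k), sum_erase_eq_sub (mem_univ k),
    card_erase_of_mem (mem_univ k), card_univ,
    Nat.cast_sub (Fintype.card_pos_iff.mpr ⟨k⟩), Nat.cast_one] at h

theorem stmt15_general (n : ℕ) (x : Fin n → ℝ)
    (b1 b2 : ℝ) (hb1 : b1 = ∑ i : Fin n, x i)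
    (hb2 : b2 = ∑ i : Fin n, ∑ j : Fin n, if i < j then x i * x j else 0) :
    ∀ k : Fin n,
      (n : ℝ) * x k ^ 2 - 2 * b1 * x k + 2 * (n - 1) * b2
        - (n - 2) * b1 ^ 2 ≤ 0 := by
  intro k
  have hsq : b1 ^ 2 = ∑ i, x i ^ 2 + 2 * b2 := by
    rw [hb1, hb2, sq_sum_eq_sum_sq_add_two_mul_sum_lt]
  have hcs := sq_sum_sub_le_card_sub_one_mul x k
  rw [Fintype.card_fin, ← hb1] at hcs
  linear_combination hcs - ((n : ℝ) - 1) * hsq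

/-- For reals `x₁, …, xₙ` (`n ≥ 2`) with `b₁ = ∑ xᵢ`,
`b₂ = ∑_{i<j} xᵢxⱼ`, every `x_k` satisfies
`n x_k² - 2b₁ x_k + 2(n-1)b₂ - (n-2)b₁² ≤ 0`. -/
theorem stmt15 (n : ℕ) (hn : 2 ≤ n) (x : Fin n → ℝ)
    (b1 b2 : ℝ) (hb1 : b1 = ∑ i : Fin n, x i)
    (hb2 : b2 = ∑ i : Fin n, ∑ j : Fin n, if i < j then x i * x j else 0) :
    ∀ k : Fin n,
      (n : ℝ) * x k ^ 2 - 2 * b1 * x k + 2 * (n - 1) * b2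
        - (n - 2) * b1 ^ 2 ≤ 0 :=
  stmt15_general n x b1 b2 hb1 hb2
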